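/- Let A be a weak *-Hopf algebra and (l, λ) a dual pair of left integrals of A and of the dual weak Hopf algebra. Define Ê_λ : A → A by Ê_λ(a) := λ⇀a = Σ a₍₁₎·⟨λ, a₍₂₎⟩, which takes values in A_L. Then: (i) the pair (l₍₂₎, S⁻¹(l₍₁₎)) is a quasi-basis for Ê_λ, i.e. Σ Ê_λ(a·l₍₂₎)·S⁻¹(l₍₁₎) = a = Σ l₍₂₎·Ê_λ(S⁻¹(l₍₁₎)·a) for all a ∈ A; (ii) the index Ind λ := Σ l₍₂₎·S⁻¹(l₍₁₎) belongs to A_R ∩ C(A), where C(A) denotes the center of A. -/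

import Mathlib

open scoped TensorProduct

noncomputable section

/-- The componentwise star operation on a tensor product of star algebras,
as an additive map (it is conjugate-linear, hence not a `LinearMap`). -/
def tensorStar (A B : Type) [Ring A] [Algebra ℂ A] [StarRing A] [StarModule ℂ A]
    [Ring B] [Algebra ℂ B] [StarRing B] [StarModule ℂ B] :
    A ⊗[ℂ] B →+ A ⊗[ℂ] B :=
  TensorProduct.liftAddHom
    (AddMonoidHom.mk'
      (fun a => AddMonoidHom.mk' (fun b => star a ⊗ₜ[ℂ] star b)
        (fun x y => by
          show star a ⊗ₜ[ℂ] star (x + y) = star a ⊗ₜ[ℂ] star x + star a ⊗ₜ[ℂ] star y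
          rw [star_add, TensorProduct.tmul_add]))
      (fun x y => by
        ext b
        show star (x + y) ⊗ₜ[ℂ] star b = star x ⊗ₜ[ℂ] star b + star y ⊗ₜ[ℂ] star b
        rw [star_add, TensorProduct.add_tmul]))
    (fun r a b => by
      show star (r • a) ⊗ₜ[ℂ] star b = star a ⊗ₜ[ℂ] star (r • b)
      rw [star_smul, star_smul, TensorProduct.smul_tmul])

/-- A finite dimensional weak `*`-Hopf algebra over `ℂ` (axioms of [BNS]),
together with the derived properties of the antipode (which follow from the
axioms and are included as fields for convenience). -/
structure WeakHopfAlgebra (A : Type) [Ring A] [Algebra ℂ A] [StarRing A] [StarModule ℂ A] where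
  Δ : A →ₗ[ℂ] A ⊗[ℂ] A
  ε : A →ₗ[ℂ] ℂ
  S : A →ₗ[ℂ] A
  Sinv : A →ₗ[ℂ] A
  finite : FiniteDimensional ℂ A
  Δ_mul : ∀ x y : A, Δ (x * y) = Δ x * Δ y
  Δ_star : ∀ x : A, Δ (star x) = tensorStar A A (Δ x)
  coassoc : ∀ x : A,
    (TensorProduct.assoc ℂ A A A) ((TensorProduct.map Δ (LinearMap.id : A →ₗ[ℂ] A)) (Δ x))
      = (TensorProduct.map (LinearMap.id : A →ₗ[ℂ] A) Δ) (Δ x)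
  counit_left : ∀ x : A,
    (TensorProduct.lid ℂ A) ((TensorProduct.map ε (LinearMap.id : A →ₗ[ℂ] A)) (Δ x)) = x
  counit_right : ∀ x : A,
    (TensorProduct.rid ℂ A) ((TensorProduct.map (LinearMap.id : A →ₗ[ℂ] A) ε) (Δ x)) = x
  unit_weak :
    (Δ 1 ⊗ₜ[ℂ] (1 : A)) * ((TensorProduct.assoc ℂ A A A).symm ((1 : A) ⊗ₜ[ℂ] Δ 1))
      = (TensorProduct.map Δ (LinearMap.id : A →ₗ[ℂ] A)) (Δ 1)
  unit_weak' :
    ((TensorProduct.assoc ℂ A A A).symm ((1 : A) ⊗ₜ[ℂ] Δ 1)) * (Δ 1 ⊗ₜ[ℂ] (1 : A))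
      = (TensorProduct.map Δ (LinearMap.id : A →ₗ[ℂ] A)) (Δ 1)
  counit_weak : ∀ x y z : A,
    ε (x * y * z) = (TensorProduct.lid ℂ ℂ)
      ((TensorProduct.map (ε ∘ₗ LinearMap.mulLeft ℂ x) (ε ∘ₗ LinearMap.mulRight ℂ z)) (Δ y))
  counit_weak' : ∀ x y z : A,
    ε (x * y * z) = (TensorProduct.lid ℂ ℂ)
      ((TensorProduct.map (ε ∘ₗ LinearMap.mulRight ℂ z) (ε ∘ₗ LinearMap.mulLeft ℂ x)) (Δ y))
  antipode_left : ∀ x : A,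
    LinearMap.mul' ℂ A ((TensorProduct.map S (LinearMap.id : A →ₗ[ℂ] A)) (Δ x))
      = (TensorProduct.rid ℂ A)
          ((TensorProduct.map (LinearMap.id : A →ₗ[ℂ] A) (ε ∘ₗ LinearMap.mulLeft ℂ x)) (Δ 1))
  antipode_right : ∀ x : A,
    LinearMap.mul' ℂ A ((TensorProduct.map (LinearMap.id : A →ₗ[ℂ] A) S) (Δ x))
      = (TensorProduct.lid ℂ A)
          ((TensorProduct.map (ε ∘ₗ LinearMap.mulRight ℂ x) (LinearMap.id : A →ₗ[ℂ] A)) (Δ 1))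
  antipode_mid : ∀ x : A,
    LinearMap.mul' ℂ A
      ((TensorProduct.map (LinearMap.mul' ℂ A ∘ₗ TensorProduct.map S (LinearMap.id : A →ₗ[ℂ] A)) S)
        ((TensorProduct.map Δ (LinearMap.id : A →ₗ[ℂ] A)) (Δ x))) = S x
  S_Sinv : ∀ x : A, S (Sinv x) = x
  Sinv_S : ∀ x : A, Sinv (S x) = x
  S_antimul : ∀ x y : A, S (x * y) = S y * S x
  S_anticomul : ∀ x : A, Δ (S x) = (TensorProduct.comm ℂ A A) ((TensorProduct.map S S) (Δ x))
  S_star : ∀ x : A, star (S (star x)) = Sinv x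

/-- The set of elements commuting with everything. -/
def centerSet (R : Type) [Mul R] : Set R := {z | ∀ r : R, z * r = r * z}

namespace WeakHopfAlgebra

variable {A : Type} [Ring A] [Algebra ℂ A] [StarRing A] [StarModule ℂ A]

/-- `Σ x₍₁₎ · S(x₍₂₎)`. -/
def swIdS (W : WeakHopfAlgebra A) (x : A) : A :=
  LinearMap.mul' ℂ A ((TensorProduct.map (LinearMap.id : A →ₗ[ℂ] A) W.S) (W.Δ x))

/-- `Σ S(x₍₁₎) · x₍₂₎`. -/
def swSId (W : WeakHopfAlgebra A) (x : A) : A :=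
  LinearMap.mul' ℂ A ((TensorProduct.map W.S (LinearMap.id : A →ₗ[ℂ] A)) (W.Δ x))

/-- `Σ x₍₂₎ · S⁻¹(x₍₁₎)`. -/
def swIdSinv (W : WeakHopfAlgebra A) (x : A) : A :=
  LinearMap.mul' ℂ A
    ((TensorProduct.map (LinearMap.id : A →ₗ[ℂ] A) W.Sinv) ((TensorProduct.comm ℂ A A) (W.Δ x)))

/-- `Σ S⁻¹(x₍₂₎) · x₍₁₎`. -/
def swSinvId (W : WeakHopfAlgebra A) (x : A) : A :=
  LinearMap.mul' ℂ A
    ((TensorProduct.map W.Sinv (LinearMap.id : A →ₗ[ℂ] A)) ((TensorProduct.comm ℂ A A) (W.Δ x)))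

/-- The left subalgebra `A_L = {(φ ⊗ id)(Δ 1) : φ ∈ A*}`. -/
def AL (W : WeakHopfAlgebra A) : Set A :=
  {a | ∃ φ : A →ₗ[ℂ] ℂ,
    a = (TensorProduct.lid ℂ A) ((TensorProduct.map φ (LinearMap.id : A →ₗ[ℂ] A)) (W.Δ 1))}

/-- The right subalgebra `A_R = {(id ⊗ φ)(Δ 1) : φ ∈ A*}`. -/
def AR (W : WeakHopfAlgebra A) : Set A :=
  {a | ∃ φ : A →ₗ[ℂ] ℂ,
    a = (TensorProduct.rid ℂ A) ((TensorProduct.map (LinearMap.id : A →ₗ[ℂ] A) φ) (W.Δ 1))}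

/-- A left integral: `a · l = Σ a₍₁₎ S(a₍₂₎) · l` for all `a`. -/
def IsLeftIntegral (W : WeakHopfAlgebra A) (l : A) : Prop := ∀ a : A, a * l = W.swIdS a * l

/-- A right integral: `r · a = r · Σ S(a₍₁₎) a₍₂₎` for all `a`. -/
def IsRightIntegral (W : WeakHopfAlgebra A) (r : A) : Prop := ∀ a : A, r * a = r * W.swSId a

/-- A normalized Haar integral. -/
def IsHaar (W : WeakHopfAlgebra A) (h : A) : Prop :=
  W.IsLeftIntegral h ∧ W.IsRightIntegral h ∧ W.swSId h = 1 ∧ W.swIdS h = 1 ∧ W.S h = h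

/-- The canonical left action of a functional `λ ∈ A*` on `A`:
`λ ⇀ a = Σ a₍₁₎ · ⟨λ, a₍₂₎⟩`. -/
def lact (W : WeakHopfAlgebra A) (lam : A →ₗ[ℂ] ℂ) : A →ₗ[ℂ] A :=
  (TensorProduct.rid ℂ A).toLinearMap ∘ₗ
    (TensorProduct.map (LinearMap.id : A →ₗ[ℂ] A) lam) ∘ₗ W.Δ

/-- `λ ∈ A*` is a left integral of the dual weak Hopf algebra:
`λ ⇀ a ∈ A_L` for all `a ∈ A`. -/
def IsDualLeftIntegral (W : WeakHopfAlgebra A) (lam : A →ₗ[ℂ] ℂ) : Prop :=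
  ∀ a : A, W.lact lam a ∈ W.AL

/-- A dual pair of left integrals `(l, λ)`. -/
def IsDualPair (W : WeakHopfAlgebra A) (l : A) (lam : A →ₗ[ℂ] ℂ) : Prop :=
  W.IsLeftIntegral l ∧ W.IsDualLeftIntegral lam ∧
  W.lact lam l = 1 ∧
  (∀ a : A,
    (TensorProduct.rid ℂ A)
      ((TensorProduct.map (LinearMap.id : A →ₗ[ℂ] A) (lam ∘ₗ LinearMap.mulLeft ℂ a)) (W.Δ l))
      = W.S a) ∧
  (∀ a : A,
    (TensorProduct.lid ℂ A)
      ((TensorProduct.map (lam ∘ₗ LinearMap.mulRight ℂ a ∘ₗ W.Sinv)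
        (LinearMap.id : A →ₗ[ℂ] A)) (W.Δ l)) = a)

end WeakHopfAlgebra

/-- A (left) module `*`-algebra over a weak `*`-Hopf algebra. -/
structure ModuleAlgebra {A : Type} [Ring A] [Algebra ℂ A] [StarRing A] [StarModule ℂ A]
    (W : WeakHopfAlgebra A) (M : Type) [Ring M] [Algebra ℂ M] [StarRing M] [StarModule ℂ M] where
  act : A →ₗ[ℂ] M →ₗ[ℂ] M
  act_mul : ∀ (a b : A) (m : M), act (a * b) m = act a (act b m)
  act_one : ∀ m : M, act 1 m = m
  act_mul' : ∀ (a : A) (m n : M),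
    act a (m * n) = LinearMap.mul' ℂ M ((TensorProduct.map (act.flip m) (act.flip n)) (W.Δ a))
  act_star : ∀ (a : A) (m : M), star (act a m) = act (star (W.S a)) (star m)
  act_unit : ∀ a : A, act a 1 = act (W.swIdS a) 1

namespace ModuleAlgebra

variable {A : Type} [Ring A] [Algebra ℂ A] [StarRing A] [StarModule ℂ A]
variable {M : Type} [Ring M] [Algebra ℂ M] [StarRing M] [StarModule ℂ M]
variable {W : WeakHopfAlgebra A}

/-- `M_R = A ▷ 1_M`. -/
def MR (MA : ModuleAlgebra W M) : Set M := Set.range fun a : A => MA.act a 1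

/-- The fixed point algebra `M^A`. -/
def fixed (MA : ModuleAlgebra W M) : Set M :=
  {n | ∀ (a : A) (m : M), MA.act a (m * n) = MA.act a m * n}

end ModuleAlgebra

section Crossed

variable {A : Type} [Ring A] [Algebra ℂ A] [StarRing A] [StarModule ℂ A]
variable {M : Type} [Ring M] [Algebra ℂ M] [StarRing M] [StarModule ℂ M]
variable {W : WeakHopfAlgebra A}

/-- The subspace of `M ⊗ A` by which one divides to form the crossed product
`M ⋊ A = M ⊗_{A_L} A`. -/
def crossedRel (MA : ModuleAlgebra W M) : Submodule ℂ (M ⊗[ℂ] A) :=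
  Submodule.span ℂ
    {x | ∃ (m : M) (a b : A), b ∈ W.AL ∧
      x = (m * MA.act b 1) ⊗ₜ[ℂ] a - m ⊗ₜ[ℂ] (b * a)}

/-- The crossed product `M ⋊ A` as a vector space. -/
abbrev Crossed (MA : ModuleAlgebra W M) : Type := (M ⊗[ℂ] A) ⧸ crossedRel MA

/-- The canonical projection `M ⊗ A → M ⋊ A`; `cmk MA (m ⊗ₜ a)` is `m ⋊ a`. -/
def cmk (MA : ModuleAlgebra W M) : M ⊗[ℂ] A →ₗ[ℂ] Crossed MA := (crossedRel MA).mkQ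

/-- The embedding `M → M ⋊ A`, `m ↦ m ⋊ 1`. -/
def iM (MA : ModuleAlgebra W M) : M →ₗ[ℂ] Crossed MA :=
  cmk MA ∘ₗ (TensorProduct.mk ℂ M A).flip (1 : A)

/-- The map `A → M ⋊ A`, `a ↦ 1 ⋊ a`. -/
def iA (MA : ModuleAlgebra W M) : A →ₗ[ℂ] Crossed MA :=
  cmk MA ∘ₗ (TensorProduct.mk ℂ M A) (1 : M)

/-- The unit `1 ⋊ 1` of `M ⋊ A`. -/
def oneC (MA : ModuleAlgebra W M) : Crossed MA := cmk MA ((1 : M) ⊗ₜ[ℂ] (1 : A))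

/-- The multiplication of the crossed product `M ⋊ A`
(whose existence is the content of Theorem 3.1), as a bundled bilinear map
together with its defining formula on generators:
`(m ⋊ a)(m' ⋊ a') = Σ m (a₍₁₎ ▷ m') ⋊ a₍₂₎ a'`. -/
structure CrossedMul (MA : ModuleAlgebra W M) where
  mul : Crossed MA →ₗ[ℂ] Crossed MA →ₗ[ℂ] Crossed MA
  mul_def : ∀ (m m' : M) (a a' : A),
    mul (cmk MA (m ⊗ₜ[ℂ] a)) (cmk MA (m' ⊗ₜ[ℂ] a'))
      = cmk MA ((TensorProduct.map ((LinearMap.mulLeft ℂ m) ∘ₗ (MA.act.flip m'))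
          (LinearMap.mulRight ℂ a')) (W.Δ a))

/-- The star operation of the crossed product `M ⋊ A`
(whose existence is part of Theorem 3.1):
`(m ⋊ a)* = Σ (a₍₁₎* ▷ m*) ⋊ a₍₂₎*`. -/
structure CrossedStar (MA : ModuleAlgebra W M) where
  st : Crossed MA →+ Crossed MA
  st_smul : ∀ (c : ℂ) (x : Crossed MA), st (c • x) = (starRingEnd ℂ c) • st x
  st_def : ∀ (m : M) (a : A),
    st (cmk MA (m ⊗ₜ[ℂ] a))
      = cmk MA ((TensorProduct.map (MA.act.flip (star m)) (LinearMap.id : A →ₗ[ℂ] A))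
          (W.Δ (star a)))

/-- The multiplication on `(M ⋊ A) ⊗ B` induced by a crossed product
multiplication on `M ⋊ A` and the algebra structure of `B`. -/
def mulT (MA : ModuleAlgebra W M) (CS : CrossedMul MA) (B : Type) [Ring B] [Algebra ℂ B] :
    Crossed MA ⊗[ℂ] B →ₗ[ℂ] Crossed MA ⊗[ℂ] B →ₗ[ℂ] Crossed MA ⊗[ℂ] B :=
  TensorProduct.lift
    ((TensorProduct.mapBilinear (RingHom.id ℂ) (Crossed MA) B (Crossed MA) B).compl₁₂ CS.mul
      (LinearMap.mul ℂ B))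

end Crossed

/-!
Write `Δ l = Σ l₁ ⊗ l₂`. By coassociativity the duality relations of `(l, λ)` become
`Σ l₁ ⊗ (λ(a ·) ⇀ l₂) = Δ (S a)` and `Σ (l₁ ↼ λ(S⁻¹(·) a)) ⊗ l₂ = Δ a`; applying
`x ⊗ y ↦ y S⁻¹(x)` to both and expanding `Ê_λ(a l₂)`, `Ê_λ(S⁻¹(l₁) a)` through
`Δ (x y) = Δ x Δ y` reduces the two quasi-basis identities to `a₁ S(a₂) a₃ = a` and to
`S⁻¹` of `S(a₁) a₂ S(a₃) = S(a)`.
For any quasi-basis `(uᵢ, vᵢ)` of any map `E`, `Σ uᵢ vᵢ` is central: both `(Σ uᵢ vᵢ) z` and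
`z (Σ uᵢ vᵢ)` expand to `Σᵢₖ uᵢ E(vᵢ z uₖ) vₖ`. Finally `Σ l₂ S⁻¹(l₁) = S⁻¹(Σ l₁ S(l₂))` lies in
`S⁻¹(A_L) ⊆ A_R`.
-/

open TensorProduct

/-- `(u i, v i)_{i ∈ s}` is a quasi-basis for `E` in the sense of Watatani. -/
def IsQuasiBasis {R ι : Type*} [Ring R] (E : R → R) (s : Finset ι) (u v : ι → R) : Prop :=
  (∀ a : R, ∑ i ∈ s, E (a * u i) * v i = a) ∧ ∀ a : R, ∑ i ∈ s, u i * E (v i * a) = a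

theorem IsQuasiBasis.sum_mul_mem_centerSet {R : Type} {ι : Type*} [Ring R] {E : R → R}
    {s : Finset ι} {u v : ι → R} (h : IsQuasiBasis E s u v) :
    ∑ i ∈ s, u i * v i ∈ centerSet R := by
  intro z
  calc (∑ i ∈ s, u i * v i) * z
      = ∑ i ∈ s, u i * (v i * z) := by simp only [Finset.sum_mul, mul_assoc]
    _ = ∑ i ∈ s, ∑ k ∈ s, u i * (E (v i * z * u k) * v k) := by
        refine Finset.sum_congr rfl fun i _ => ?_
        conv_lhs => rw [← h.1 (v i * z)]
        rw [Finset.mul_sum]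
    _ = ∑ k ∈ s, (∑ i ∈ s, u i * E (v i * (z * u k))) * v k := by
        rw [Finset.sum_comm]
        simp only [Finset.sum_mul, mul_assoc]
    _ = z * ∑ k ∈ s, u k * v k := by simp only [h.2, Finset.mul_sum, mul_assoc]

namespace WeakHopfAlgebra

variable {A : Type} [Ring A] [Algebra ℂ A] [StarRing A] [StarModule ℂ A] (W : WeakHopfAlgebra A)

/-- `x ↼ φ = Σ ⟨φ, x₍₁₎⟩ x₍₂₎`. -/
def ract (φ : A →ₗ[ℂ] ℂ) : A →ₗ[ℂ] A :=
  (TensorProduct.lid ℂ A).toLinearMap ∘ₗ TensorProduct.map φ LinearMap.id ∘ₗ W.Δ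

theorem S_injective : Function.Injective W.S :=
  Function.LeftInverse.injective W.Sinv_S

theorem S_one : W.S 1 = 1 :=
  calc W.S 1 = W.S 1 * W.S (W.Sinv 1) := by rw [W.S_Sinv, mul_one]
    _ = 1 := by rw [← W.S_antimul, mul_one, W.S_Sinv]

theorem Sinv_mul (x y : A) : W.Sinv (x * y) = W.Sinv y * W.Sinv x :=
  W.S_injective (by rw [W.S_antimul, W.S_Sinv, W.S_Sinv, W.S_Sinv])

theorem comul_one_eq_comm_map_S : W.Δ 1 = TensorProduct.comm ℂ A A (map W.S W.S (W.Δ 1)) := by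
  rw [← W.S_anticomul, W.S_one]

theorem Sinv_swIdS (x : A) : W.Sinv (W.swIdS x) = W.swIdSinv x := by
  unfold swIdS swIdSinv
  induction W.Δ x using TensorProduct.induction_on with
  | zero => simp
  | tmul p q => simp [W.Sinv_mul, W.Sinv_S]
  | add p q hp hq => simp only [map_add, hp, hq]

theorem S_swIdSinv (x : A) : W.S (W.swIdSinv x) = W.swIdS x := by
  rw [← W.Sinv_swIdS, W.S_Sinv]

theorem swIdSinv_S (x : A) : W.swIdSinv (W.S x) = W.swSId x := by
  unfold swIdSinv swSId
  rw [W.S_anticomul]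
  induction W.Δ x using TensorProduct.induction_on with
  | zero => simp
  | tmul p q => simp [W.Sinv_S]
  | add p q hp hq => simp only [map_add, hp, hq]

theorem comul_Sinv (x : A) :
    W.Δ (W.Sinv x) = map W.Sinv W.Sinv (TensorProduct.comm ℂ A A (W.Δ x)) := by
  have hSinvS : W.Sinv ∘ₗ W.S = LinearMap.id := LinearMap.ext W.Sinv_S
  conv_rhs => rw [← W.S_Sinv x, W.S_anticomul, comm_comm, ← LinearMap.comp_apply, ← map_comp,
    hSinvS, map_id, LinearMap.id_apply]

theorem lact_Sinv (φ : A →ₗ[ℂ] ℂ) (x : A) :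
    W.lact φ (W.Sinv x) = W.Sinv (W.ract (φ ∘ₗ W.Sinv) x) := by
  simp only [lact, ract, LinearMap.coe_comp, LinearEquiv.coe_coe, Function.comp_apply,
    W.comul_Sinv]
  induction W.Δ x using TensorProduct.induction_on with
  | zero => simp
  | tmul p q => simp
  | add p q hp hq => simp only [map_add, hp, hq]

theorem swIdS_mem_AL (x : A) : W.swIdS x ∈ W.AL :=
  ⟨_, W.antipode_right x⟩

theorem Sinv_mem_AR {a : A} (ha : a ∈ W.AL) : W.Sinv a ∈ W.AR := by
  obtain ⟨φ, rfl⟩ := ha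
  refine ⟨φ ∘ₗ W.S, ?_⟩
  conv_lhs => rw [W.comul_one_eq_comm_map_S]
  induction W.Δ 1 using TensorProduct.induction_on with
  | zero => simp
  | tmul p q => simp [W.Sinv_S]
  | add p q hp hq => simp only [map_add, hp, hq]

theorem swIdSinv_mem_AR (x : A) : W.swIdSinv x ∈ W.AR := by
  rw [← W.Sinv_swIdS]
  exact W.Sinv_mem_AR (W.swIdS_mem_AL x)

section Sweedler

variable {W} {x : A} {s : Finset (A × A)}

theorem assoc_sum_comul_tmul (hx : W.Δ x = ∑ i ∈ s, i.1 ⊗ₜ i.2) :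
    TensorProduct.assoc ℂ A A A (∑ i ∈ s, W.Δ i.1 ⊗ₜ i.2) = ∑ i ∈ s, i.1 ⊗ₜ W.Δ i.2 := by
  have h := W.coassoc x
  rw [hx] at h
  simpa only [map_sum, map_tmul, LinearMap.id_coe, id_eq] using h

theorem comul_lact (φ : A →ₗ[ℂ] ℂ) (hx : W.Δ x = ∑ i ∈ s, i.1 ⊗ₜ i.2) :
    W.Δ (W.lact φ x) = ∑ i ∈ s, i.1 ⊗ₜ W.lact φ i.2 := by
  set f : A ⊗[ℂ] A →ₗ[ℂ] A := (TensorProduct.rid ℂ A).toLinearMap ∘ₗ map LinearMap.id φ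
  have hf : ∀ (w : A ⊗[ℂ] A) (v : A),
      map LinearMap.id f (TensorProduct.assoc ℂ A A A (w ⊗ₜ v)) = φ v • w := by
    intro w v
    induction w using TensorProduct.induction_on with
    | zero => simp
    | tmul p q => simp [f, TensorProduct.tmul_smul]
    | add p q hp hq => simp only [add_tmul, map_add, hp, hq, smul_add]
  calc W.Δ (W.lact φ x) = ∑ i ∈ s, φ i.2 • W.Δ i.1 := by simp [lact, hx, map_sum]
    _ = map LinearMap.id f (TensorProduct.assoc ℂ A A A (∑ i ∈ s, W.Δ i.1 ⊗ₜ i.2)) := by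
        simp only [map_sum, hf]
    _ = ∑ i ∈ s, i.1 ⊗ₜ W.lact φ i.2 := by
        rw [assoc_sum_comul_tmul hx]
        simp [f, lact, map_sum]

theorem comul_ract (φ : A →ₗ[ℂ] ℂ) (hx : W.Δ x = ∑ i ∈ s, i.1 ⊗ₜ i.2) :
    W.Δ (W.ract φ x) = ∑ i ∈ s, W.ract φ i.1 ⊗ₜ i.2 := by
  set f : A ⊗[ℂ] A →ₗ[ℂ] A := (TensorProduct.lid ℂ A).toLinearMap ∘ₗ map φ LinearMap.id
  have hf : ∀ (u : A) (w : A ⊗[ℂ] A),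
      map f LinearMap.id ((TensorProduct.assoc ℂ A A A).symm (u ⊗ₜ w)) = φ u • w := by
    intro u w
    induction w using TensorProduct.induction_on with
    | zero => simp
    | tmul p q => simp [f, TensorProduct.smul_tmul']
    | add p q hp hq => simp only [tmul_add, map_add, hp, hq, smul_add]
  calc W.Δ (W.ract φ x) = ∑ i ∈ s, φ i.1 • W.Δ i.2 := by simp [ract, hx, map_sum]
    _ = map f LinearMap.id ((TensorProduct.assoc ℂ A A A).symm (∑ i ∈ s, i.1 ⊗ₜ W.Δ i.2)) := by
        simp only [map_sum, hf]
    _ = ∑ i ∈ s, W.ract φ i.1 ⊗ₜ i.2 := by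
        rw [← assoc_sum_comul_tmul hx, LinearEquiv.symm_apply_apply]
        simp [f, ract, map_sum]

theorem swIdSinv_eq_sum {ι : Type*} {t : Finset ι} {f g : ι → A}
    (hx : W.Δ x = ∑ i ∈ t, f i ⊗ₜ g i) : W.swIdSinv x = ∑ i ∈ t, g i * W.Sinv (f i) := by
  simp [swIdSinv, hx, map_sum]

theorem lact_mul_left (φ : A →ₗ[ℂ] ℂ) (hx : W.Δ x = ∑ i ∈ s, i.1 ⊗ₜ i.2) (v : A) :
    W.lact φ (x * v) = ∑ i ∈ s, i.1 * W.lact (φ ∘ₗ LinearMap.mulLeft ℂ i.2) v := by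
  simp only [lact, LinearMap.coe_comp, LinearEquiv.coe_coe, Function.comp_apply, W.Δ_mul, hx,
    Finset.sum_mul, map_sum]
  refine Finset.sum_congr rfl fun i _ => ?_
  induction W.Δ v using TensorProduct.induction_on with
  | zero => simp
  | tmul p q => simp
  | add p q hp hq => simp only [mul_add, map_add, hp, hq]

theorem lact_mul_right (φ : A →ₗ[ℂ] ℂ) (hx : W.Δ x = ∑ i ∈ s, i.1 ⊗ₜ i.2) (v : A) :
    W.lact φ (v * x) = ∑ i ∈ s, W.lact (φ ∘ₗ LinearMap.mulRight ℂ i.2) v * i.1 := by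
  simp only [lact, LinearMap.coe_comp, LinearEquiv.coe_coe, Function.comp_apply, W.Δ_mul, hx,
    Finset.mul_sum, map_sum]
  refine Finset.sum_congr rfl fun i _ => ?_
  induction W.Δ v using TensorProduct.induction_on with
  | zero => simp
  | tmul p q => simp
  | add p q hp hq => simp only [add_mul, map_add, hp, hq]

theorem sum_mul_swSId (hx : W.Δ x = ∑ i ∈ s, i.1 ⊗ₜ i.2) : ∑ i ∈ s, i.1 * W.swSId i.2 = x := by
  obtain ⟨t, h1⟩ := TensorProduct.exists_finset (W.Δ 1)
  have hS : ∀ y, W.swSId y = ∑ j ∈ t, W.ε (y * j.2) • j.1 := fun y => by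
    simpa [swSId, h1, map_sum] using W.antipode_left y
  calc ∑ i ∈ s, i.1 * W.swSId i.2
      = TensorProduct.rid ℂ A (map LinearMap.id W.ε (W.Δ (x * 1))) := by
        rw [W.Δ_mul, hx, h1, Finset.sum_mul_sum]
        simp [hS, Finset.mul_sum]
    _ = x := by rw [mul_one, W.counit_right]

theorem sum_S_mul_swIdS (hx : W.Δ x = ∑ i ∈ s, i.1 ⊗ₜ i.2) :
    ∑ i ∈ s, W.S i.1 * W.swIdS i.2 = W.S x := by
  have h : map W.Δ LinearMap.id (W.Δ x)
      = (TensorProduct.assoc ℂ A A A).symm (∑ i ∈ s, i.1 ⊗ₜ W.Δ i.2) := by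
    rw [← assoc_sum_comul_tmul hx, LinearEquiv.symm_apply_apply, hx]
    simp [map_sum]
  rw [← W.antipode_mid x, h]
  simp only [map_sum]
  refine Finset.sum_congr rfl fun i _ => ?_
  unfold swIdS
  induction W.Δ i.2 using TensorProduct.induction_on with
  | zero => simp
  | tmul p q => simp [mul_assoc]
  | add p q hp hq => simp only [tmul_add, map_add, hp, hq, mul_add]

theorem sum_swIdSinv_mul (hx : W.Δ x = ∑ i ∈ s, i.1 ⊗ₜ i.2) :
    ∑ i ∈ s, W.swIdSinv i.2 * i.1 = x :=
  W.S_injective (by simp only [map_sum, W.S_antimul, W.S_swIdSinv, sum_S_mul_swIdS hx])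

end Sweedler

section QuasiBasis

variable {W} {l : A} {lam : A →ₗ[ℂ] ℂ} {s : Finset (A × A)}

theorem sum_lact_mul_mul_Sinv (hS : ∀ a, W.lact (lam ∘ₗ LinearMap.mulLeft ℂ a) l = W.S a)
    (hl : W.Δ l = ∑ i ∈ s, i.1 ⊗ₜ i.2) (a : A) :
    ∑ i ∈ s, W.lact lam (a * i.2) * W.Sinv i.1 = a := by
  obtain ⟨t, ha⟩ := TensorProduct.exists_finset (W.Δ a)
  have hy : ∀ y, ∑ i ∈ s, W.lact (lam ∘ₗ LinearMap.mulLeft ℂ y) i.2 * W.Sinv i.1 = W.swSId y :=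
    fun y => by rw [← swIdSinv_eq_sum (comul_lact _ hl), hS, swIdSinv_S]
  calc ∑ i ∈ s, W.lact lam (a * i.2) * W.Sinv i.1
      = ∑ k ∈ t, k.1 * ∑ i ∈ s, W.lact (lam ∘ₗ LinearMap.mulLeft ℂ k.2) i.2 * W.Sinv i.1 := by
        simp only [lact_mul_left lam ha, Finset.sum_mul, Finset.mul_sum, mul_assoc]
        exact Finset.sum_comm
    _ = a := by simp only [hy, sum_mul_swSId ha]

theorem sum_mul_lact_Sinv_mul (hR : ∀ a, W.ract (lam ∘ₗ LinearMap.mulRight ℂ a ∘ₗ W.Sinv) l = a)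
    (hl : W.Δ l = ∑ i ∈ s, i.1 ⊗ₜ i.2) (a : A) :
    ∑ i ∈ s, i.2 * W.lact lam (W.Sinv i.1 * a) = a := by
  obtain ⟨t, ha⟩ := TensorProduct.exists_finset (W.Δ a)
  have hy : ∀ y, ∑ i ∈ s, i.2 * W.Sinv (W.ract (lam ∘ₗ LinearMap.mulRight ℂ y ∘ₗ W.Sinv) i.1)
      = W.swIdSinv y :=
    fun y => by conv_rhs => rw [← hR y, swIdSinv_eq_sum (comul_ract _ hl)]
  calc ∑ i ∈ s, i.2 * W.lact lam (W.Sinv i.1 * a)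
      = ∑ k ∈ t, (∑ i ∈ s,
          i.2 * W.Sinv (W.ract (lam ∘ₗ LinearMap.mulRight ℂ k.2 ∘ₗ W.Sinv) i.1)) * k.1 := by
        simp only [lact_mul_right lam ha, lact_Sinv, LinearMap.comp_assoc, Finset.sum_mul,
          Finset.mul_sum, mul_assoc]
        exact Finset.sum_comm
    _ = a := by simp only [hy, sum_swIdSinv_mul ha]

theorem isQuasiBasis_lact (hS : ∀ a, W.lact (lam ∘ₗ LinearMap.mulLeft ℂ a) l = W.S a)
    (hR : ∀ a, W.ract (lam ∘ₗ LinearMap.mulRight ℂ a ∘ₗ W.Sinv) l = a)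
    (hl : W.Δ l = ∑ i ∈ s, i.1 ⊗ₜ i.2) :
    IsQuasiBasis (W.lact lam) s (fun i => i.2) (fun i => W.Sinv i.1) :=
  ⟨sum_lact_mul_mul_Sinv hS hl, sum_mul_lact_Sinv_mul hR hl⟩

end QuasiBasis

end WeakHopfAlgebra

/-- Proposition 2.29 of [NSW]: for a dual pair `(l, λ)` of nondegenerate left
integrals, with `Ê_λ(a) = λ ⇀ a`:
(i) `(l₍₂₎, S⁻¹(l₍₁₎))` is a quasi-basis for `Ê_λ`, i.e.
`Σ Ê_λ(a·l₍₂₎)·S⁻¹(l₍₁₎) = a = Σ l₍₂₎·Ê_λ(S⁻¹(l₍₁₎)·a)`;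
(ii) `Ind λ = Σ l₍₂₎·S⁻¹(l₍₁₎)` belongs to `A_R ∩ C(A)`. -/
theorem dual_pair_quasi_basis_and_index
    {A : Type} [Ring A] [Algebra ℂ A] [StarRing A] [StarModule ℂ A]
    (W : WeakHopfAlgebra A) (l : A) (lam : A →ₗ[ℂ] ℂ)
    (hdp : W.IsDualPair l lam) :
    (∀ a : A,
      LinearMap.mul' ℂ A
        ((TensorProduct.map ((W.lact lam) ∘ₗ LinearMap.mulLeft ℂ a) W.Sinv)
          ((TensorProduct.comm ℂ A A) (W.Δ l))) = a)
    ∧ (∀ a : A,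
      LinearMap.mul' ℂ A
        ((TensorProduct.map (LinearMap.id : A →ₗ[ℂ] A)
            ((W.lact lam) ∘ₗ LinearMap.mulRight ℂ a ∘ₗ W.Sinv))
          ((TensorProduct.comm ℂ A A) (W.Δ l))) = a)
    ∧ W.swIdSinv l ∈ W.AR ∩ centerSet A := by
  obtain ⟨-, -, -, hS, hR⟩ := hdp
  obtain ⟨s, hl⟩ := TensorProduct.exists_finset (W.Δ l)
  have hq := W.isQuasiBasis_lact hS hR hl
  refine ⟨fun a => ?_, fun a => ?_, W.swIdSinv_mem_AR l, ?_⟩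
  · simpa [hl, map_sum] using hq.1 a
  · simpa [hl, map_sum] using hq.2 a
  · rw [WeakHopfAlgebra.swIdSinv_eq_sum hl]
    exact hq.sum_mul_mem_centerSet
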